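/- In the simplex setting, for all integers n with 4 ≤ n ≤ m, Σ_{σ∈A_m} σ(Op_n) = 2 · (n choose 2) · ((n−2) choose 2) · (m−4)! · Op_m in ℝ[G]. -/

import Mathlib

noncomputable section
open scoped Classical

/-- The Laplacian `Δ = |S|·1 - Σ_{s ∈ S} s` in the real group algebra `ℝ[G]`. -/
def lap {G : Type*} [Group G] (S : Finset G) : MonoidAlgebra ℝ G :=
  (S.card : MonoidAlgebra ℝ G) - ∑ s ∈ S, MonoidAlgebra.of ℝ G s

/-- The star involution on `ℝ[G]` induced by `g ↦ g⁻¹`. -/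
def starG {G : Type*} [Group G] (x : MonoidAlgebra ℝ G) : MonoidAlgebra ℝ G :=
  MonoidAlgebra.mapDomain (fun g => g⁻¹) x

/-- `g` lies in the ball of radius `R` about the identity in the word metric
induced by the (symmetric) set `S`. -/
def inBall {G : Type*} [Group G] (S : Set G) (R : ℕ) (g : G) : Prop :=
  ∃ l : List G, (∀ x ∈ l, x ∈ S) ∧ l.length ≤ R ∧ l.prod = g

/-- `x ∈ Σ²_R ℝ[G]`: `x` is a finite sum of hermitian squares `ξ_i* ξ_i` with each
`ξ_i` supported in the ball of radius `R` about the identity. -/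
def SOS {G : Type*} [Group G] (S : Set G) (R : ℕ) (x : MonoidAlgebra ℝ G) : Prop :=
  ∃ (N : ℕ) (ξ : Fin N → MonoidAlgebra ℝ G),
    (∀ i, ∀ g ∈ (ξ i).coeff.support, inBall S R g) ∧
    x = ∑ i, starG (ξ i) * ξ i

/-- The simplex setting: a group `G` with a finite symmetric generating set `S`
(with `1 ∉ S`), an action of the alternating group `A_m` on `G` by automorphisms
preserving `S`, and an `A_m`-equivariant labelling of `S` by edges (2-element
subsets) of `{1,…,m}` such that generators with disjoint labels commute. -/
structure SimplexSetting (m : ℕ) (G : Type*) [Group G] where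
  S : Finset G
  one_not_mem : (1 : G) ∉ S
  symm : ∀ s ∈ S, s⁻¹ ∈ S
  generates : Subgroup.closure (S : Set G) = ⊤
  act : alternatingGroup (Fin m) →* MulAut G
  act_mem : ∀ (σ : alternatingGroup (Fin m)), ∀ s ∈ S, act σ s ∈ S
  lbl : G → Finset (Fin m)
  lbl_card : ∀ s ∈ S, (lbl s).card = 2
  lbl_equivariant : ∀ (σ : alternatingGroup (Fin m)), ∀ s ∈ S,
    lbl (act σ s) = (lbl s).image (σ : Equiv.Perm (Fin m))
  comm : ∀ s ∈ S, ∀ t ∈ S, Disjoint (lbl s) (lbl t) → Commute s t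

namespace SimplexSetting

variable {m : ℕ} {G : Type*} [Group G] (P : SimplexSetting m G)

/-- The set `E_n` of edges of the simplex spanned by the first `n` vertices. -/
def edges (m n : ℕ) : Finset (Finset (Fin m)) :=
  Finset.univ.filter (fun e => e.card = 2 ∧ ∀ i ∈ e, (i : ℕ) < n)

/-- `S_e`: the generators labelled by the edge `e`. -/
def Se (e : Finset (Fin m)) : Finset G := P.S.filter (fun s => P.lbl s = e)

/-- The edge Laplacian `Δ_e = |S_e|·1 - Σ_{t ∈ S_e} t`. -/
def De (e : Finset (Fin m)) : MonoidAlgebra ℝ G :=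
  ((P.Se e).card : MonoidAlgebra ℝ G) - ∑ t ∈ P.Se e, MonoidAlgebra.of ℝ G t

/-- `Δ_n = Σ_{e ∈ E_n} Δ_e`. -/
def Dn (n : ℕ) : MonoidAlgebra ℝ G := ∑ e ∈ edges m n, P.De e

/-- `Sq_n = Σ_{e ∈ E_n} Δ_e²`. -/
def Sq (n : ℕ) : MonoidAlgebra ℝ G := ∑ e ∈ edges m n, (P.De e) ^ 2

/-- `Adj_n`: the sum of `Δ_e Δ_f` over ordered pairs of edges of `E_n` sharing
exactly one vertex. -/
def Adj (n : ℕ) : MonoidAlgebra ℝ G :=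
  ∑ e ∈ edges m n, ∑ f ∈ (edges m n).filter (fun f => (e ∩ f).card = 1), P.De e * P.De f

/-- `Op_n`: the sum of `Δ_e Δ_f` over ordered pairs of disjoint edges of `E_n`. -/
def Op (n : ℕ) : MonoidAlgebra ℝ G :=
  ∑ e ∈ edges m n, ∑ f ∈ (edges m n).filter (fun f => e ∩ f = ∅), P.De e * P.De f

/-- The induced action of `A_m` on the group algebra `ℝ[G]`. -/
def algAct (σ : alternatingGroup (Fin m)) (x : MonoidAlgebra ℝ G) : MonoidAlgebra ℝ G :=
  MonoidAlgebra.mapDomain (P.act σ) x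

/-- `h_n = (n-2)·(n-1)!/2`, as a real number. -/
def hr (n : ℕ) : ℝ := ((n : ℝ) - 2) * (Nat.factorial (n - 1)) / 2

end SimplexSetting

open SimplexSetting

/-! Write `Op_n` as the sum of `Δ_e Δ_f` over the ordered pairs `(e, f)` of disjoint edges of
`E_n`; since `σ(Δ_e) = Δ_{σ e}`, the pair `(e, f)` contributes `Σ_σ Δ_{σ e} Δ_{σ f}`. The
alternating group acts transitively on the ordered pairs of disjoint edges of the whole
simplex, so this sum runs over each such pair exactly `|Stab(e, f)|` times and equals
`|Stab(e, f)| • Op_m`. By orbit–stabilizer, `|Stab(e, f)| = (m!/2) / (C(m,2) C(m-2,2))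
= 2 (m-4)!`, and there are `C(n,2) C(n-2,2)` pairs to sum over. -/

open Finset MulAction
open scoped Pointwise Nat

theorem MulAction.sum_smul_eq_card_stabilizer_nsmul {H X M : Type*} [Group H] [Fintype H]
    [MulAction H X] [AddCommMonoid M] {x : X} {s : Finset X} (hs : (s : Set X) = orbit H x)
    (f : X → M) : ∑ g : H, f (g • x) = Nat.card (stabilizer H x) • ∑ y ∈ s, f y := by
  classical
  have : Fintype (orbit H x) := Set.fintypeRange _
  calc ∑ g : H, f (g • x)
      = ∑ q : orbit H x × stabilizer H x, f q.1 :=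
        Fintype.sum_equiv (orbitProdStabilizerEquivGroup H x).symm _ _ fun _ => rfl
    _ = Nat.card (stabilizer H x) • ∑ y : orbit H x, f y := by
        rw [Fintype.sum_prod_type, Finset.sum_comm]
        simp [Nat.card_eq_fintype_card]
    _ = Nat.card (stabilizer H x) • ∑ y ∈ s, f y := by
        rw [← Finset.sum_coe_sort s]
        congr 1
        exact Fintype.sum_equiv (Equiv.setCongr hs.symm) _ _ fun _ => rfl

theorem exists_alternatingGroup_smul_eq_of_disjoint {α : Type*} [Fintype α] [DecidableEq α]
    {e f e' f' : Finset α} (he : #e = 2) (hf : #f = 2) (he' : #e' = 2) (hf' : #f' = 2)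
    (hef : Disjoint e f) (hef' : Disjoint e' f') :
    ∃ σ : alternatingGroup α, σ • e = e' ∧ σ • f = f' := by
  have hinj {a b c d : α} (hab : a ≠ b) (hcd : c ≠ d)
      (hef : Disjoint ({a, b} : Finset α) {c, d}) : Function.Injective ![a, b, c, d] := by
    simp only [disjoint_insert_left, disjoint_insert_right, disjoint_singleton, mem_insert,
      mem_singleton, not_or] at hef
    intro i j hij
    fin_cases i <;> fin_cases j <;> simp_all [eq_comm]
  obtain ⟨a, b, hab, rfl⟩ := card_eq_two.1 he
  obtain ⟨c, d, hcd, rfl⟩ := card_eq_two.1 hf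
  obtain ⟨a', b', hab', rfl⟩ := card_eq_two.1 he'
  obtain ⟨c', d', hcd', rfl⟩ := card_eq_two.1 hf'
  obtain ⟨σ, hσ⟩ :=
    Equiv.Perm.exists_extending_pair _ _ (hinj hab hcd hef) (hinj hab' hcd' hef')
  have ha := hσ 0; have hb := hσ 1; have hc := hσ 2; have hd := hσ 3
  simp only [Matrix.cons_val] at ha hb hc hd
  rcases Int.units_eq_one_or (Equiv.Perm.sign σ) with hsign | hsign
  · exact ⟨⟨σ, Equiv.Perm.mem_alternatingGroup.2 hsign⟩,
      by simp [Subgroup.mk_smul, smul_finset_insert, ha, hb],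
      by simp [Subgroup.mk_smul, smul_finset_insert, hc, hd]⟩
  -- `σ` is odd; `σ * swap a b` is even and still maps `{a, b}` to `{a', b'}`
  have hc_ab : c ∉ ({a, b} : Finset α) := disjoint_right.1 hef (by simp)
  have hd_ab : d ∉ ({a, b} : Finset α) := disjoint_right.1 hef (by simp)
  simp only [mem_insert, mem_singleton, not_or] at hc_ab hd_ab
  refine ⟨⟨σ * Equiv.swap a b, by simp [hsign, hab]⟩, ?_, ?_⟩
  · simp [smul_finset_insert, ha, hb, pair_comm]
  · simp [smul_finset_insert, Equiv.swap_apply_of_ne_of_ne, hc_ab, hd_ab, hc, hd]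

namespace SimplexSetting

section Edges

variable {m n : ℕ}

def vertices (m n : ℕ) : Finset (Fin m) := {i | (i : ℕ) < n}

lemma card_vertices (h : n ≤ m) : #(vertices m n) = n := by
  rw [vertices, Fin.card_filter_val_lt, min_eq_right h]

lemma edges_eq_powersetCard (m n : ℕ) : edges m n = powersetCard 2 (vertices m n) := by
  ext e
  simp [edges, vertices, mem_powersetCard, subset_iff, and_comm]

lemma card_edges (h : n ≤ m) : #(edges m n) = n.choose 2 := by
  rw [edges_eq_powersetCard, card_powersetCard, card_vertices h]

lemma card_filter_disjoint_edges (h : n ≤ m) {e : Finset (Fin m)} (he : e ∈ edges m n) :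
    #{f ∈ edges m n | Disjoint e f} = (n - 2).choose 2 := by
  rw [edges_eq_powersetCard, mem_powersetCard] at *
  have hfilter : {f ∈ powersetCard 2 (vertices m n) | Disjoint e f} =
      powersetCard 2 (vertices m n \ e) := by
    ext f
    simp [mem_powersetCard, subset_sdiff, disjoint_comm, and_right_comm]
  rw [hfilter, card_powersetCard, card_sdiff_of_subset he.1, card_vertices h, he.2]

def disjointEdgePairs (m n : ℕ) : Finset (Finset (Fin m) × Finset (Fin m)) :=
  {p ∈ edges m n ×ˢ edges m n | Disjoint p.1 p.2}

lemma card_disjointEdgePairs (h : n ≤ m) :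
    #(disjointEdgePairs m n) = n.choose 2 * (n - 2).choose 2 := by
  rw [disjointEdgePairs, card_filter, sum_product,
    sum_congr rfl fun e he => (card_filter _ _).symm.trans (card_filter_disjoint_edges h he),
    sum_const, card_edges h, smul_eq_mul]

lemma edges_mono {n n' : ℕ} (h : n ≤ n') : edges m n ⊆ edges m n' := by
  rw [edges_eq_powersetCard, edges_eq_powersetCard]
  exact powersetCard_mono (monotone_filter_right _ fun _ _ hi => hi.trans_le h)

lemma disjointEdgePairs_mono {n n' : ℕ} (h : n ≤ n') :
    disjointEdgePairs m n ⊆ disjointEdgePairs m n' :=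
  filter_subset_filter _ (product_subset_product (edges_mono h) (edges_mono h))

lemma mem_disjointEdgePairs_self {p : Finset (Fin m) × Finset (Fin m)} :
    p ∈ disjointEdgePairs m m ↔ #p.1 = 2 ∧ #p.2 = 2 ∧ Disjoint p.1 p.2 := by
  simp [disjointEdgePairs, edges, and_assoc]

lemma smul_mem_disjointEdgePairs_self {p : Finset (Fin m) × Finset (Fin m)}
    (hp : p ∈ disjointEdgePairs m m) (σ : alternatingGroup (Fin m)) :
    σ • p ∈ disjointEdgePairs m m := by
  rw [mem_disjointEdgePairs_self] at *
  rwa [Prod.smul_fst, Prod.smul_snd, card_smul_finset, card_smul_finset, ← disjoint_coe,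
    coe_smul_finset, coe_smul_finset, Set.disjoint_smul_set, disjoint_coe]

lemma orbit_eq_disjointEdgePairs_self {p : Finset (Fin m) × Finset (Fin m)}
    (hp : p ∈ disjointEdgePairs m m) :
    orbit (alternatingGroup (Fin m)) p = disjointEdgePairs m m := by
  ext q
  refine ⟨fun ⟨σ, hσ⟩ => hσ ▸ smul_mem_disjointEdgePairs_self hp σ, fun hq => ?_⟩
  rw [mem_coe] at hq
  rw [mem_disjointEdgePairs_self] at hp hq
  obtain ⟨σ, h1, h2⟩ := exists_alternatingGroup_smul_eq_of_disjoint hp.1 hp.2.1 hq.1 hq.2.1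
    hp.2.2 hq.2.2
  exact ⟨σ, Prod.ext h1 h2⟩

lemma choose_two_mul_choose_two_mul_factorial (h : 4 ≤ m) :
    m.choose 2 * (m - 2).choose 2 * (4 * (m - 4)!) = m ! := by
  have hchoose : m.choose 2 * (m - 2).choose 2 = m.choose 4 * 6 := by
    rw [← Nat.choose_mul (by norm_num : 2 ≤ 4)]
    rfl
  rw [hchoose, ← Nat.choose_mul_factorial_mul_factorial h, show (4 : ℕ)! = 24 from rfl]
  ring

lemma card_stabilizer_of_mem_disjointEdgePairs_self (hm : 4 ≤ m)
    {p : Finset (Fin m) × Finset (Fin m)} (hp : p ∈ disjointEdgePairs m m) :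
    Nat.card (stabilizer (alternatingGroup (Fin m)) p) = 2 * (m - 4)! := by
  have : Nontrivial (Fin m) := Fin.nontrivial_iff_two_le.2 (by omega)
  have horbit := (stabilizer (alternatingGroup (Fin m)) p).card_mul_index
  rw [index_stabilizer, orbit_eq_disjointEdgePairs_self hp, Set.ncard_coe_finset,
    card_disjointEdgePairs le_rfl] at horbit
  have hA := two_mul_nat_card_alternatingGroup (α := Fin m)
  rw [Nat.card_perm, Nat.card_fin, ← choose_two_mul_choose_two_mul_factorial hm, ← horbit] at hA
  have hpos : 0 < m.choose 2 * (m - 2).choose 2 :=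
    Nat.mul_pos (Nat.choose_pos (by omega)) (Nat.choose_pos (by omega))
  apply Nat.eq_of_mul_eq_mul_left (Nat.mul_pos two_pos hpos)
  linarith

end Edges

section Algebra

variable {m : ℕ} {G : Type*} [Group G] (P : SimplexSetting m G)

lemma lbl_act (σ : alternatingGroup (Fin m)) {s : G} (hs : s ∈ P.S) :
    P.lbl (P.act σ s) = σ • P.lbl s :=
  P.lbl_equivariant σ s hs

lemma Se_smul (σ : alternatingGroup (Fin m)) (e : Finset (Fin m)) :
    P.Se (σ • e) = (P.Se e).map (P.act σ).toEquiv.toEmbedding := by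
  ext g
  have hinv : (P.act σ).toEquiv.symm g = P.act σ⁻¹ g := by simp
  simp only [Se, mem_map_equiv, mem_filter, hinv]
  constructor
  · rintro ⟨hg, he⟩
    exact ⟨P.act_mem _ g hg, by rw [P.lbl_act _ hg, he, inv_smul_smul]⟩
  · rintro ⟨hg, he⟩
    have hσ : P.act σ (P.act σ⁻¹ g) = g := by simp
    exact ⟨hσ ▸ P.act_mem σ _ hg, by rw [← hσ, P.lbl_act σ hg, he]⟩

lemma algAct_eq_mapDomainRingHom (σ : alternatingGroup (Fin m)) :
    P.algAct σ = MonoidAlgebra.mapDomainRingHom ℝ (P.act σ : G →* G) :=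
  rfl

lemma algAct_De (σ : alternatingGroup (Fin m)) (e : Finset (Fin m)) :
    P.algAct σ (P.De e) = P.De (σ • e) := by
  rw [algAct_eq_mapDomainRingHom, De, De, map_sub, map_natCast, map_sum, Se_smul, card_map,
    sum_map]
  simp

lemma Op_eq_sum (n : ℕ) :
    P.Op n = ∑ p ∈ disjointEdgePairs m n, P.De p.1 * P.De p.2 := by
  simp_rw [Op, disjointEdgePairs, sum_filter, sum_product, ← disjoint_iff_inter_eq_empty]

lemma algAct_Op (σ : alternatingGroup (Fin m)) (n : ℕ) :
    P.algAct σ (P.Op n) =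
      ∑ p ∈ disjointEdgePairs m n, P.De (σ • p).1 * P.De (σ • p).2 := by
  rw [Op_eq_sum, algAct_eq_mapDomainRingHom, map_sum]
  simp_rw [map_mul, ← algAct_eq_mapDomainRingHom, algAct_De]
  rfl

end Algebra

end SimplexSetting

theorem sum_algAct_Op_general {m : ℕ} {G : Type*} [Group G]
    (P : SimplexSetting m G) :
    ∀ n : ℕ, 4 ≤ n → n ≤ m →
      ∑ σ : alternatingGroup (Fin m), P.algAct σ (P.Op n) =
        ((2 * n.choose 2 * (n - 2).choose 2 * Nat.factorial (m - 4) : ℕ) : ℝ) •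
          P.Op m := by
  intro n hn hnm
  calc ∑ σ : alternatingGroup (Fin m), P.algAct σ (P.Op n)
      = ∑ p ∈ disjointEdgePairs m n, ∑ σ : alternatingGroup (Fin m),
          P.De (σ • p).1 * P.De (σ • p).2 := by
        simp_rw [P.algAct_Op]
        exact sum_comm
    _ = ∑ p ∈ disjointEdgePairs m n, (2 * (m - 4)!) • P.Op m := by
        refine sum_congr rfl fun p hp => ?_
        have hp' := disjointEdgePairs_mono hnm hp
        rw [sum_smul_eq_card_stabilizer_nsmul (orbit_eq_disjointEdgePairs_self hp').symm
          fun q => P.De q.1 * P.De q.2, card_stabilizer_of_mem_disjointEdgePairs_self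
          (hn.trans hnm) hp', Op_eq_sum]
    _ = _ := by
        rw [sum_const, card_disjointEdgePairs hnm, smul_smul, Nat.cast_smul_eq_nsmul]
        congr 1
        ring

/-- `Σ_{σ ∈ A_m} σ(Op_n) = 2·(n choose 2)·((n-2) choose 2)·(m-4)!·Op_m` for `4 ≤ n ≤ m`. -/
theorem sum_algAct_Op {m : ℕ} {G : Type*} [Group G]
    (P : SimplexSetting m G) (hm : 3 ≤ m) :
    ∀ n : ℕ, 4 ≤ n → n ≤ m →
      ∑ σ : alternatingGroup (Fin m), P.algAct σ (P.Op n) =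
        ((2 * n.choose 2 * (n - 2).choose 2 * Nat.factorial (m - 4) : ℕ) : ℝ) •
          P.Op m :=
  sum_algAct_Op_general P
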